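/- arXiv:math/0205034 — 4 statements merged into one kernel-verified Lean document; each statement's English description precedes it below -/
import Mathlib

section
/- Let k be a field, let a, b, n be positive integers with n ≥ 2, and let y_1, …, y_b be elements of the free associative algebra k⟨x_1, …, x_a⟩, each a k-linear combination of words of length at most n−1. Let S = k⟨x_1, …, x_a⟩/(y_1, …, y_b), let S_i ⊆ S be the image of the k-span of words of length at most i, and let C ⊆ M_n(S) be the subalgebra of upper triangular matrices (m_{pq}) with m_{pq} ∈ S_{q−p} for q ≥ p. Then C has finite global dimension: there exists a natural number d such that every left C-module has projective dimension at most d. -/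
open scoped TensorProduct
open Function

universe u v w

section ProjRes

/-- A projective resolution of a left `R`-module `M`. -/
structure ProjRes (R : Type u) (M : Type v) [Ring R] [AddCommGroup M] [Module R M] :
    Type (max u (v + 1)) where
  P : ℕ → Type v
  [acg : ∀ i, AddCommGroup (P i)]
  [mod : ∀ i, Module R (P i)]
  d : ∀ i, P (i + 1) →ₗ[R] P i
  ε : P 0 →ₗ[R] M
  proj : ∀ i, Module.Projective R (P i)
  surj : Function.Surjective ε
  exact0 : Function.Exact (d 0) ε
  exact : ∀ i, Function.Exact (d (i + 1)) (d i)

attribute [instance] ProjRes.acg ProjRes.mod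

/-- `M` has projective dimension at most `n`: there is a projective resolution
which vanishes in degrees above `n`. -/
def ProjDimLE (R : Type u) (M : Type v) [Ring R] [AddCommGroup M] [Module R M]
    (n : ℕ) : Prop :=
  ∃ F : ProjRes R M, ∀ i, n < i → ∀ x : F.P i, x = 0

end ProjRes


section FreeAlg

variable (k : Type u) [Field k] (a b n : ℕ)

/-- The `k`-span of the words of length at most `i` in the free algebra
`k⟨x_1, …, x_a⟩`. -/
def wordSpan (i : ℕ) : Submodule k (FreeAlgebra k (Fin a)) :=
  Submodule.span k
    {w | ∃ l : List (Fin a), l.length ≤ i ∧ w = (l.map (FreeAlgebra.ι k)).prod}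

variable (y : Fin b → FreeAlgebra k (Fin a))

/-- The finitely presented algebra `S = k⟨x_1, …, x_a⟩ / ⟨y_1, …, y_b⟩` (quotient by
the two-sided ideal generated by the `y j`). -/
def SP : Type u :=
  RingQuot (fun p q : FreeAlgebra k (Fin a) => ∃ j : Fin b, p = y j ∧ q = 0)

noncomputable instance : Ring (SP k a b y) :=
  inferInstanceAs (Ring (RingQuot (fun p q : FreeAlgebra k (Fin a) =>
    ∃ j : Fin b, p = y j ∧ q = 0)))

noncomputable instance : Algebra k (SP k a b y) :=
  inferInstanceAs (Algebra k (RingQuot (fun p q : FreeAlgebra k (Fin a) =>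
    ∃ j : Fin b, p = y j ∧ q = 0)))

/-- The quotient map `k⟨x_1, …, x_a⟩ → S`. -/
noncomputable def SPmk : FreeAlgebra k (Fin a) →ₐ[k] SP k a b y :=
  RingQuot.mkAlgHom k _

/-- `S_i ⊆ S`: the image in `S` of the `k`-span of the words of length at most `i`. -/
noncomputable def Sdeg (i : ℕ) : Submodule k (SP k a b y) :=
  Submodule.map (SPmk k a b y).toLinearMap (wordSpan k a i)

/-- The set of upper triangular `n × n` matrices `(m_{pq})` over `S` with
`m_{pq} ∈ S_{q-p}` for `q ≥ p` and `m_{pq} = 0` for `q < p`. -/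
def upperTriSet : Set (Matrix (Fin n) (Fin n) (SP k a b y)) :=
  {m | ∀ p q : Fin n, (q < p → m p q = 0) ∧
    ((p : ℕ) ≤ (q : ℕ) → m p q ∈ Sdeg k a b y ((q : ℕ) - (p : ℕ)))}

end FreeAlg

/-!
The diagonal matrix units `e_p` of `C` are idempotents summing to `1` with `e_q C e_p = 0` for
`p < q` and `e_p C e_p = k e_p`, the latter because `S_0 = k`. Over any such algebra `R` a module
`M` is covered by the projective module `⨁_p R e_p ⊗_k e_p M`, and if `e_q M = 0` for all `q > t`,
then the kernel of this cover is killed by every `e_q` with `q ≥ t`: the component of an element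
of the kernel at `q` comes from `e_q R e_q ⊗ e_q M = e_q ⊗ e_q M`, on which the cover is
injective. So the `n`-th syzygy of every module vanishes, and the global dimension of `R` is at
most `n - 1`.
-/

structure IsTriangularIdempotents (k : Type*) [Field k] {R : Type*} [Ring R] [Algebra k R]
    {n : ℕ} (e : Fin n → R) : Prop where
  idem : ∀ p, IsIdempotentElem (e p)
  sum_eq_one : ∑ p, e p = 1
  mul_mul_eq_zero_of_lt : ∀ {p q : Fin n}, p < q → ∀ r, e q * r * e p = 0
  exists_mul_mul_eq_smul : ∀ p r, ∃ c : k, e p * r * e p = c • e p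

def IsSupportedBelow {R : Type*} [Ring R] {n : ℕ} (e : Fin n → R) (M : Type*) [AddCommGroup M]
    [Module R M] (t : ℕ) : Prop :=
  ∀ p : Fin n, t ≤ p → ∀ m : M, e p • m = 0

theorem IsSupportedBelow.mono {R : Type*} [Ring R] {n : ℕ} {e : Fin n → R} {M : Type*}
    [AddCommGroup M] [Module R M] {t t' : ℕ} (hM : IsSupportedBelow e M t) (h : t ≤ t') :
    IsSupportedBelow e M t' :=
  fun p hp => hM p (h.trans hp)

namespace IsTriangularIdempotents

variable {k : Type*} [Field k] {R : Type u} [Ring R] [Algebra k R] {n : ℕ} {e : Fin n → R}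
  (he : IsTriangularIdempotents k e)
include he

theorem subsingleton {M : Type*} [AddCommGroup M] [Module R M] (hM : IsSupportedBelow e M 0) :
    Subsingleton M :=
  subsingleton_of_forall_eq 0 fun m => by
    rw [← one_smul R m, ← he.sum_eq_one, Finset.sum_smul]
    exact Finset.sum_eq_zero fun p _ => hM p (Nat.zero_le _) m

theorem projective_span_singleton (p : Fin n) : Module.Projective R (Submodule.span R {e p}) :=
  Module.Projective.of_split (Submodule.span R {e p}).subtype
    (LinearMap.codRestrict _ (LinearMap.toSpanSingleton R R (e p))
      fun r => Submodule.smul_mem _ r (Submodule.mem_span_singleton_self _))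
    (by
      ext ⟨x, hx⟩
      obtain ⟨r, rfl⟩ := Submodule.mem_span_singleton.1 hx
      change (r * e p) * e p = r * e p
      rw [mul_assoc, (he.idem p).eq])

theorem mul_eq_zero_of_mem_span {p q : Fin n} (hpq : p < q) {x : R}
    (hx : x ∈ Submodule.span R {e p}) : e q * x = 0 := by
  obtain ⟨r, rfl⟩ := Submodule.mem_span_singleton.1 hx
  rw [smul_eq_mul, ← mul_assoc, he.mul_mul_eq_zero_of_lt hpq]

theorem exists_mul_eq_smul_of_mem_span {p : Fin n} {x : R}
    (hx : x ∈ Submodule.span R {e p}) : ∃ c : k, e p * x = c • e p := by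
  obtain ⟨r, rfl⟩ := Submodule.mem_span_singleton.1 hx
  rw [smul_eq_mul, ← mul_assoc]
  exact he.exists_mul_mul_eq_smul p r

end IsTriangularIdempotents

section Cover

variable (k : Type*) [Field k] {R : Type u} [Ring R] [Algebra k R] {n : ℕ} (e : Fin n → R)
variable (M : Type u) [AddCommGroup M] [Module R M] [Module k M] [IsScalarTower k R M]

def corner (p : Fin n) : Submodule k M :=
  LinearMap.range (DistribSMul.toLinearMap k M (e p))

abbrev IdempotentCover : Type u := ∀ p, Submodule.span R {e p} ⊗[k] corner k e M p

noncomputable def actionMap (p : Fin n) : Submodule.span R {e p} ⊗[k] corner k e M p →ₗ[R] M :=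
  TensorProduct.AlgebraTensorModule.lift <|
    LinearMap.mk₂' R k (fun (x : Submodule.span R {e p}) (v : corner k e M p) => (x : R) • (v : M))
      (fun _ _ _ => add_smul _ _ _) (fun _ _ _ => mul_smul _ _ _)
      (fun _ _ _ => smul_add _ _ _) (fun _ _ _ => smul_comm _ _ _)

noncomputable def coverMap : IdempotentCover k e M →ₗ[R] M :=
  ∑ p, actionMap k e M p ∘ₗ LinearMap.proj p

theorem coverMap_single (p : Fin n) (z : Submodule.span R {e p} ⊗[k] corner k e M p) :
    coverMap k e M (Pi.single p z) = actionMap k e M p z := by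
  simp only [coverMap, LinearMap.coe_sum, Finset.sum_apply, LinearMap.coe_comp, comp_apply,
    LinearMap.coe_proj, Function.eval]
  rw [Finset.sum_eq_single p (fun q _ hq => by rw [Pi.single_eq_of_ne hq, map_zero]) (by simp),
    Pi.single_eq_same]

noncomputable def coverIncl (p : Fin n) : corner k e M p →ₗ[k] IdempotentCover k e M :=
  LinearMap.single k _ p ∘ₗ TensorProduct.mk k _ _ ⟨e p, Submodule.mem_span_singleton_self _⟩

variable {k e M}

theorem smul_mem_corner (p : Fin n) (m : M) : e p • m ∈ corner k e M p := ⟨m, rfl⟩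

namespace IsTriangularIdempotents

variable (he : IsTriangularIdempotents k e)
include he

theorem smul_of_mem_corner {p : Fin n} {v : M} (hv : v ∈ corner k e M p) : e p • v = v := by
  obtain ⟨m, rfl⟩ := hv
  rw [DistribSMul.toLinearMap_apply, smul_smul, (he.idem p).eq]

theorem coverMap_coverIncl (p : Fin n) (v : corner k e M p) :
    coverMap k e M (coverIncl k e M p v) = v :=
  (coverMap_single k e M p _).trans (he.smul_of_mem_corner v.2)

theorem coverMap_surjective : Surjective (coverMap k e M) := fun m => by
  refine ⟨∑ p, coverIncl k e M p ⟨e p • m, smul_mem_corner p m⟩, ?_⟩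
  simp only [map_sum, he.coverMap_coverIncl]
  rw [← Finset.sum_smul, he.sum_eq_one, one_smul]

theorem projective_idempotentCover : Module.Projective R (IdempotentCover k e M) :=
  have := he.projective_span_singleton
  .of_equiv (DirectSum.linearEquivFunOnFintype R _ _)

theorem smul_mem_range_coverIncl {t : ℕ} (hM : IsSupportedBelow e M (t + 1)) {q : Fin n}
    (hq : t ≤ q) (y : IdempotentCover k e M) : e q • y ∈ LinearMap.range (coverIncl k e M q) := by
  rw [← Finset.univ_sum_single y, Finset.smul_sum]
  refine Submodule.sum_mem _ fun p _ => ?_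
  induction y p with
  | zero => simp
  | add z w hz hw => rw [Pi.single_add, smul_add]; exact add_mem hz hw
  | tmul x v =>
    rw [← Pi.single_smul, TensorProduct.smul_tmul']
    rcases lt_trichotomy p q with hpq | rfl | hqp
    · have hx : e q • x = 0 := Subtype.ext (he.mul_eq_zero_of_mem_span hpq x.2)
      simp [hx]
    · obtain ⟨c, hc⟩ := he.exists_mul_eq_smul_of_mem_span x.2
      have hx : e p • x = c • ⟨e p, Submodule.mem_span_singleton_self _⟩ := Subtype.ext hc
      exact ⟨c • v, by rw [hx, TensorProduct.smul_tmul]; rfl⟩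
    · have hv : v = 0 := by
        obtain ⟨m, hm⟩ := v.2
        ext
        rw [← hm]
        exact hM p (by omega) m
      simp [hv]

theorem isSupportedBelow_ker_coverMap {t : ℕ} (hM : IsSupportedBelow e M (t + 1)) :
    IsSupportedBelow e (LinearMap.ker (coverMap k e M)) t := by
  intro q hq x
  obtain ⟨v, hv⟩ := he.smul_mem_range_coverIncl hM hq x
  have hv0 : v = 0 := Subtype.ext <| by
    rw [← he.coverMap_coverIncl q v, hv, LinearMap.map_smul, LinearMap.mem_ker.1 x.2, smul_zero]
    rfl
  ext
  rw [Submodule.coe_smul, ← hv, hv0, map_zero, Submodule.coe_zero]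

end IsTriangularIdempotents

end Cover

structure TowerModule (k : Type*) [Field k] (R : Type u) [Ring R] [Algebra k R] where
  carrier : Type u
  [addCommGroup : AddCommGroup carrier]
  [moduleR : Module R carrier]
  [moduleK : Module k carrier]
  [isScalarTower : IsScalarTower k R carrier]

attribute [instance] TowerModule.addCommGroup TowerModule.moduleR TowerModule.moduleK
  TowerModule.isScalarTower

section Resolution

variable (k : Type*) [Field k] {R : Type u} [Ring R] [Algebra k R] {n : ℕ} (e : Fin n → R)
variable (M : Type u) [AddCommGroup M] [Module R M] [Module k M] [IsScalarTower k R M]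

noncomputable def syzygy : ℕ → TowerModule k R
  | 0 => ⟨M⟩
  | i + 1 => ⟨LinearMap.ker (coverMap k e (syzygy i).carrier)⟩

variable {k e}

namespace IsTriangularIdempotents

variable (he : IsTriangularIdempotents k e)
include he

theorem exact_coverMap (N : TowerModule k R) :
    Exact ((LinearMap.ker (coverMap k e N.carrier)).subtype ∘ₗ
      coverMap k e (LinearMap.ker (coverMap k e N.carrier))) (coverMap k e N.carrier) :=
  he.coverMap_surjective.comp_exact_iff_exact.2 (LinearMap.exact_subtype_ker_map _)

noncomputable def coverResolution : ProjRes R M where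
  P i := IdempotentCover k e (syzygy k e M i).carrier
  d i := (LinearMap.ker (coverMap k e (syzygy k e M i).carrier)).subtype ∘ₗ
    coverMap k e (syzygy k e M (i + 1)).carrier
  ε := coverMap k e M
  proj _ := he.projective_idempotentCover
  surj := he.coverMap_surjective
  exact0 := he.exact_coverMap ⟨M⟩
  exact i := (Injective.comp_exact_iff_exact (Submodule.injective_subtype _)).2
    (he.exact_coverMap (syzygy k e M (i + 1)))

theorem isSupportedBelow_syzygy (i : ℕ) :
    IsSupportedBelow e (syzygy k e M i).carrier (n - i) := by
  induction i with
  | zero => exact fun p hp => absurd p.isLt (by omega)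
  | succ i ih => exact he.isSupportedBelow_ker_coverMap (ih.mono (by omega))

theorem projDimLE (M : Type u) [AddCommGroup M] [Module R M] : ProjDimLE R M (n - 1) := by
  let _ : Module k M := Module.compHom M (algebraMap k R)
  have _ : IsScalarTower k R M := ⟨fun c r m => by
    rw [Algebra.smul_def, mul_smul]
    rfl⟩
  refine ⟨he.coverResolution M, fun i hi x => ?_⟩
  have hsyz := he.isSupportedBelow_syzygy M i
  rw [Nat.sub_eq_zero_of_le (by omega)] at hsyz
  have := he.subsingleton hsyz
  exact Subsingleton.elim (α := IdempotentCover k e (syzygy k e M i).carrier) x 0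

end IsTriangularIdempotents

end Resolution

section FilteredUpperTriangular

variable {k : Type*} [Field k] {A : Type*} [Ring A] [Algebra k A] (F : ℕ → Submodule k A)
  [SetLike.GradedMonoid F] (n : ℕ)

def filteredUpperTriangular : Subalgebra k (Matrix (Fin n) (Fin n) A) where
  carrier := {m | ∀ p q : Fin n, (q < p → m p q = 0) ∧ ((p : ℕ) ≤ q → m p q ∈ F (q - p))}
  add_mem' {m m'} hm hm' p q :=
    ⟨fun h => by rw [Matrix.add_apply, (hm p q).1 h, (hm' p q).1 h, add_zero],
      fun h => add_mem ((hm p q).2 h) ((hm' p q).2 h)⟩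
  mul_mem' {m m'} hm hm' p q := by
    rw [Matrix.mul_apply]
    refine ⟨fun h => Finset.sum_eq_zero fun r _ => ?_, fun h => Submodule.sum_mem _ fun r _ => ?_⟩
    · rcases lt_or_ge r p with hrp | hpr
      · rw [(hm p r).1 hrp, zero_mul]
      · rw [(hm' r q).1 (h.trans_le hpr), mul_zero]
    · rcases lt_or_ge r p with hrp | hpr
      · rw [(hm p r).1 hrp, zero_mul]
        exact zero_mem _
      rcases lt_or_ge q r with hqr | hrq
      · rw [(hm' r q).1 hqr, mul_zero]
        exact zero_mem _
      have hpr : (p : ℕ) ≤ r := hpr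
      have hrq : (r : ℕ) ≤ q := hrq
      have := SetLike.GradedMul.mul_mem ((hm p r).2 hpr) ((hm' r q).2 hrq)
      rwa [show (r : ℕ) - p + (q - r) = q - p by omega] at this
  algebraMap_mem' c p q := by
    rw [Matrix.algebraMap_matrix_apply, Algebra.algebraMap_eq_smul_one]
    refine ⟨fun h => if_neg (ne_of_gt h), fun _ => ?_⟩
    split_ifs with hpq
    · subst hpq
      simpa using Submodule.smul_mem _ c (SetLike.GradedOne.one_mem (A := F))
    · exact zero_mem _

variable {F n}

theorem single_mem_filteredUpperTriangular {p q : Fin n} (hpq : p ≤ q) {x : A}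
    (hx : x ∈ F (q - p)) : Matrix.single p q x ∈ filteredUpperTriangular F n := by
  intro i j
  by_cases hij : p = i ∧ q = j
  · obtain ⟨rfl, rfl⟩ := hij
    exact ⟨fun h => absurd hpq (not_le.2 h), fun _ => by rwa [Matrix.single_apply_same]⟩
  · rw [Matrix.single_apply_of_ne _ _ _ _ _ hij]
    exact ⟨fun _ => rfl, fun _ => zero_mem _⟩

variable (F n)

noncomputable def diagonalIdempotent (p : Fin n) : filteredUpperTriangular F n :=
  ⟨Matrix.single p p 1,
    single_mem_filteredUpperTriangular le_rfl (by simpa using SetLike.GradedOne.one_mem)⟩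

theorem isTriangularIdempotents_diagonalIdempotent (hF : F 0 ≤ Submodule.span k {1}) :
    IsTriangularIdempotents k (diagonalIdempotent F n) where
  idem p := Subtype.ext <| by simp [diagonalIdempotent]
  sum_eq_one := Subtype.ext <| by simp [diagonalIdempotent, Matrix.sum_single_one]
  mul_mul_eq_zero_of_lt {p q} hpq r := Subtype.ext <| by
    simp [diagonalIdempotent, (r.2 q p).1 hpq]
  exists_mul_mul_eq_smul p r := by
    obtain ⟨c, hc⟩ := Submodule.mem_span_singleton.1 (hF (by simpa using (r.2 p p).2 le_rfl))
    exact ⟨c, Subtype.ext <| by simp [diagonalIdempotent, ← hc, Matrix.smul_single]⟩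

end FilteredUpperTriangular

section GradedMonoidMap

variable {k : Type*} [Field k] {A B : Type*} [Ring A] [Algebra k A] [Ring B] [Algebra k B]

theorem SetLike.GradedMonoid.map (F : ℕ → Submodule k A) [SetLike.GradedMonoid F]
    (f : A →ₐ[k] B) : SetLike.GradedMonoid fun i => (F i).map f.toLinearMap where
  one_mem := ⟨1, SetLike.GradedOne.one_mem, map_one f⟩
  mul_mem := by
    rintro i j _ _ ⟨x, hx, rfl⟩ ⟨x', hx', rfl⟩
    exact ⟨x * x', SetLike.GradedMul.mul_mem hx hx', map_mul f x x'⟩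

end GradedMonoidMap

section Words

variable (k : Type u) [Field k] (a b : ℕ) (y : Fin b → FreeAlgebra k (Fin a))

theorem wordSpan_zero : wordSpan k a 0 = Submodule.span k {1} := by
  simp [wordSpan]

instance : SetLike.GradedMonoid (wordSpan k a) where
  one_mem := Submodule.subset_span ⟨[], le_rfl, rfl⟩
  mul_mem i j x x' hx hx' := by
    have := Submodule.mul_mem_mul hx hx'
    rw [wordSpan, wordSpan, Submodule.span_mul_span] at this
    refine Submodule.span_mono ?_ this
    rintro _ ⟨_, ⟨l, hl, rfl⟩, _, ⟨l', hl', rfl⟩, rfl⟩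
    exact ⟨l ++ l', by simpa using add_le_add hl hl', by simp⟩

instance : SetLike.GradedMonoid (Sdeg k a b y) :=
  SetLike.GradedMonoid.map _ _

theorem Sdeg_zero : Sdeg k a b y 0 = Submodule.span k {1} := by
  rw [Sdeg, wordSpan_zero, Submodule.map_span, Set.image_singleton, AlgHom.toLinearMap_apply,
    map_one]

end Words

theorem statement1_general (k : Type u) [Field k] (a b n : ℕ) (y : Fin b → FreeAlgebra k (Fin a)) :
    ∃ C : Subalgebra k (Matrix (Fin n) (Fin n) (SP k a b y)),
      (C : Set (Matrix (Fin n) (Fin n) (SP k a b y))) = upperTriSet k a b n y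
      ∧ ∃ d : ℕ, ∀ (M : Type u) [AddCommGroup M] [Module C M], ProjDimLE C M d :=
  ⟨filteredUpperTriangular (Sdeg k a b y) n, rfl, n - 1, fun M _ _ =>
    (isTriangularIdempotents_diagonalIdempotent _ n (Sdeg_zero k a b y).le).projDimLE M⟩

/-- Let `k` be a field, `a, b, n` positive integers with `n ≥ 2`, and
`y_1, …, y_b ∈ k⟨x_1, …, x_a⟩` each a `k`-linear combination of words of length at most
`n - 1`.  Let `S = k⟨x_1, …, x_a⟩/(y_1, …, y_b)`, let `S_i` be the image of the span of
words of length at most `i`, and let `C ⊆ Mₙ(S)` be the subalgebra of upper triangular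
matrices `(m_{pq})` with `m_{pq} ∈ S_{q-p}`.  Then `C` has finite global dimension:
there is a `d` such that every left `C`-module has projective dimension at most `d`. -/
theorem statement1 (k : Type u) [Field k] (a b n : ℕ) (ha : 0 < a) (hb : 0 < b)
    (hn : 2 ≤ n) (y : Fin b → FreeAlgebra k (Fin a))
    (hy : ∀ j, y j ∈ wordSpan k a (n - 1)) :
    ∃ C : Subalgebra k (Matrix (Fin n) (Fin n) (SP k a b y)),
      (C : Set (Matrix (Fin n) (Fin n) (SP k a b y))) = upperTriSet k a b n y
      ∧ ∃ d : ℕ, ∀ (M : Type u) [AddCommGroup M] [Module C M], ProjDimLE C M d :=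
  statement1_general k a b n y
end

section
/- Let n ≥ 1, let A ⊆ M_n(S) be the subring of lower triangular matrices with diagonal entries in the image of k → S, and for 1 ≤ i ≤ n let P_i be the left A-module of column vectors v ∈ S^n with v_j = 0 for j < i and v_i in the image of k → S. If V is a flat k-module, then P_i ⊗_k V is a flat left A-module. -/
open scoped TensorProduct
open Function

universe u v w

section NCT

variable (A : Type u) [Ring A]

def NCT.rels (X : Type v) (M : Type w) [AddCommGroup X] [Module Aᵐᵒᵖ X]
    [AddCommGroup M] [Module A M] : Submodule ℤ (TensorProduct ℤ X M) :=
  Submodule.span ℤ {z | ∃ (x : X) (a : A) (m : M),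
    z = (MulOpposite.op a • x) ⊗ₜ[ℤ] m - x ⊗ₜ[ℤ] (a • m)}

/-- `X ⊗_A M` for a right `A`-module `X` and a left `A`-module `M`. -/
def NCT (X : Type v) (M : Type w) [AddCommGroup X] [Module Aᵐᵒᵖ X]
    [AddCommGroup M] [Module A M] : Type (max v w) :=
  TensorProduct ℤ X M ⧸ NCT.rels A X M

noncomputable instance (X : Type v) (M : Type w) [AddCommGroup X] [Module Aᵐᵒᵖ X]
    [AddCommGroup M] [Module A M] : AddCommGroup (NCT A X M) :=
  inferInstanceAs (AddCommGroup (TensorProduct ℤ X M ⧸ NCT.rels A X M))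

/-- The image of `x ⊗ m` in `X ⊗_A M`. -/
noncomputable def NCT.mk {X : Type v} {M : Type w} [AddCommGroup X] [Module Aᵐᵒᵖ X]
    [AddCommGroup M] [Module A M] (x : X) (m : M) : NCT A X M :=
  Submodule.Quotient.mk (x ⊗ₜ[ℤ] m)

/-- The map `X ⊗_A M → X ⊗_A M'` induced by a map `M → M'` of left `A`-modules. -/
noncomputable def NCT.lmap {X : Type v} [AddCommGroup X] [Module Aᵐᵒᵖ X]
    {M : Type w} {M' : Type w} [AddCommGroup M] [Module A M] [AddCommGroup M'] [Module A M']
    (f : M →ₗ[A] M') : NCT A X M →ₗ[ℤ] NCT A X M' :=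
  Submodule.mapQ _ _ (LinearMap.lTensor X f.toAddMonoidHom.toIntLinearMap) (by
    rw [NCT.rels, Submodule.span_le]
    rintro z ⟨x, a, m, rfl⟩
    simp only [SetLike.mem_coe, Submodule.mem_comap, map_sub, LinearMap.lTensor_tmul,
      AddMonoidHom.coe_toIntLinearMap, LinearMap.toAddMonoidHom_coe]
    exact Submodule.subset_span ⟨x, a, f m, by show _ = _; erw [map_sub, LinearMap.lTensor_tmul, LinearMap.lTensor_tmul]; simp [map_smul]⟩)

/-- The map `X ⊗_A M → X' ⊗_A M` induced by a map `X → X'` of right `A`-modules. -/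
noncomputable def NCT.rmap {X : Type v} {X' : Type v} [AddCommGroup X] [Module Aᵐᵒᵖ X]
    [AddCommGroup X'] [Module Aᵐᵒᵖ X'] {M : Type w} [AddCommGroup M] [Module A M]
    (f : X →ₗ[Aᵐᵒᵖ] X') : NCT A X M →ₗ[ℤ] NCT A X' M :=
  Submodule.mapQ _ _ (LinearMap.rTensor M f.toAddMonoidHom.toIntLinearMap) (by
    rw [NCT.rels, Submodule.span_le]
    rintro z ⟨x, a, m, rfl⟩
    simp only [SetLike.mem_coe, Submodule.mem_comap, map_sub, LinearMap.rTensor_tmul,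
      AddMonoidHom.coe_toIntLinearMap, LinearMap.toAddMonoidHom_coe]
    exact Submodule.subset_span ⟨f x, a, m, by show _ = _; erw [map_sub, LinearMap.rTensor_tmul, LinearMap.rTensor_tmul]; simp [map_smul]⟩)

/-- A left `A`-module `M` is flat if tensoring with it over `A` preserves
injectivity of maps of right `A`-modules. -/
def NCFlat (M : Type w) [AddCommGroup M] [Module A M] : Prop :=
  ∀ (X X' : Type u) [AddCommGroup X] [Module Aᵐᵒᵖ X] [AddCommGroup X'] [Module Aᵐᵒᵖ X']
    (f : X →ₗ[Aᵐᵒᵖ] X'), Function.Injective f → Function.Injective (NCT.rmap A (M := M) f)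

end NCT

variable (k : Type u) (S : Type u) [CommRing k] [Ring S] [Algebra k S] (n : ℕ)

/-- The subring of `n × n` lower triangular matrices over `S` whose diagonal
entries lie in the image of `k → S`. -/
def lowTri : Subring (Matrix (Fin n) (Fin n) S) where
  carrier := {m | (∀ p q : Fin n, p < q → m p q = 0) ∧
    ∀ p : Fin n, m p p ∈ (algebraMap k S).range}
  zero_mem' := ⟨fun _ _ _ => rfl, fun _ => zero_mem _⟩
  one_mem' := ⟨fun p q h => Matrix.one_apply_ne (ne_of_lt h), fun _ => by
    simpa [Matrix.one_apply] using one_mem (algebraMap k S).range⟩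
  add_mem' := fun {a b} ha hb => ⟨fun p q h => by
      simp [Matrix.add_apply, ha.1 p q h, hb.1 p q h],
    fun p => add_mem (ha.2 p) (hb.2 p)⟩
  neg_mem' := fun {a} ha => ⟨fun p q h => by simp [Matrix.neg_apply, ha.1 p q h],
    fun p => neg_mem (ha.2 p)⟩
  mul_mem' := fun {a b} ha hb => by
    constructor
    · intro p q h
      rw [Matrix.mul_apply]
      apply Finset.sum_eq_zero
      intro l _
      rcases lt_or_ge p l with h' | h'
      · rw [ha.1 p l h', zero_mul]
      · rw [hb.1 l q (lt_of_le_of_lt h' h), mul_zero]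
    · intro p
      rw [Matrix.mul_apply]
      rw [Finset.sum_eq_single p]
      · exact mul_mem (ha.2 p) (hb.2 p)
      · intro l _ hl
        rcases lt_or_gt_of_ne hl with h' | h'
        · rw [hb.1 l p h', mul_zero]
        · rw [ha.1 p l h', zero_mul]
      · intro h; exact absurd (Finset.mem_univ p) h

/-- The space of column vectors `v ∈ Sⁿ` with `v j = 0` for `j < i` and
`v i` in the image of `k → S` (as a `k`-submodule of `Sⁿ`). -/
def Pcol (i : ℕ) : Submodule k (Fin n → S) where
  carrier := {v | (∀ j : Fin n, (j : ℕ) < i → v j = 0) ∧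
    ∀ j : Fin n, (j : ℕ) = i → v j ∈ (algebraMap k S).range}
  zero_mem' := ⟨fun _ _ => rfl, fun _ _ => zero_mem _⟩
  add_mem' := fun {a b} ha hb => ⟨fun j hj => by simp [Pi.add_apply, ha.1 j hj, hb.1 j hj],
    fun j hj => add_mem (ha.2 j hj) (hb.2 j hj)⟩
  smul_mem' := fun c v hv => ⟨fun j hj => by simp [Pi.smul_apply, hv.1 j hj],
    fun j hj => by
      obtain ⟨x, hx⟩ := hv.2 j hj
      exact ⟨c * x, by rw [map_mul, Pi.smul_apply, ← hx, Algebra.smul_def]⟩⟩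

lemma mulVec_mem_Pcol {i : ℕ} {a : Matrix (Fin n) (Fin n) S} (ha : a ∈ lowTri k S n)
    {v : Fin n → S} (hv : v ∈ Pcol k S n i) : a.mulVec v ∈ Pcol k S n i := by
  constructor
  · intro j hj
    rw [Matrix.mulVec, dotProduct]
    apply Finset.sum_eq_zero
    intro l _
    rcases lt_or_ge (l : ℕ) i with h' | h'
    · rw [hv.1 l h', mul_zero]
    · rw [ha.1 j l (by rw [Fin.lt_def]; omega), zero_mul]
  · intro j hj
    have : a.mulVec v j = a j j * v j := by
      rw [Matrix.mulVec, dotProduct]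
      rw [Finset.sum_eq_single j]
      · intro l _ hl
        rcases lt_or_gt_of_ne hl with h' | h'
        · rw [hv.1 l (by rw [Fin.lt_def] at h'; omega), mul_zero]
        · rw [ha.1 j l h', zero_mul]
      · intro h; exact absurd (Finset.mem_univ j) h
    rw [this]
    exact mul_mem (ha.2 j) (hv.2 j hj)

/-- Left action of the subring `lowTri k S n` on the column modules. -/
noncomputable instance Pcol.smulLowTri (i : ℕ) :
    SMul (lowTri k S n) (Pcol k S n i) :=
  ⟨fun a v => ⟨a.1.mulVec v.1, mulVec_mem_Pcol k S n a.2 v.2⟩⟩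

noncomputable instance Pcol.moduleLowTri (i : ℕ) :
    Module (lowTri k S n) (Pcol k S n i) where
  smul := (· • ·)
  one_smul v := Subtype.ext (Matrix.one_mulVec v.1)
  mul_smul a b v := Subtype.ext (Matrix.mulVec_mulVec v.1 a.1 b.1).symm
  smul_zero a := Subtype.ext (Matrix.mulVec_zero a.1)
  smul_add a v w := Subtype.ext (Matrix.mulVec_add a.1 v.1 w.1)
  add_smul a b v := Subtype.ext (Matrix.add_mulVec a.1 b.1 v.1)
  zero_smul v := Subtype.ext (Matrix.zero_mulVec v.1)

@[simp] lemma Pcol.smul_def (i : ℕ) (a : lowTri k S n) (v : Pcol k S n i) :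
    (a • v : Pcol k S n i).1 = a.1.mulVec v.1 := rfl

instance Pcol.smulCommClass (i : ℕ) :
    SMulCommClass k (lowTri k S n) (Pcol k S n i) where
  smul_comm c a v := Subtype.ext (Matrix.mulVec_smul a.1 c v.1).symm

/-- Left action of `lowTri k S n` on the module of all column vectors. -/
noncomputable instance colSMul : SMul (lowTri k S n) (Fin n → S) :=
  ⟨fun a v => a.1.mulVec v⟩

noncomputable instance colModule : Module (lowTri k S n) (Fin n → S) where
  smul := (· • ·)
  one_smul v := Matrix.one_mulVec v
  mul_smul a b v := (Matrix.mulVec_mulVec v a.1 b.1).symm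
  smul_zero a := Matrix.mulVec_zero a.1
  smul_add a v w := Matrix.mulVec_add a.1 v w
  add_smul a b v := Matrix.add_mulVec a.1 b.1 v
  zero_smul v := Matrix.zero_mulVec v

/-- Right action of `lowTri k S n` on the module of all row vectors. -/
noncomputable instance rowSMul : SMul (lowTri k S n)ᵐᵒᵖ (Fin n → S) :=
  ⟨fun a v => Matrix.vecMul v a.unop.1⟩

noncomputable instance rowModule : Module (lowTri k S n)ᵐᵒᵖ (Fin n → S) where
  smul := (· • ·)
  one_smul v := Matrix.vecMul_one v
  mul_smul a b v := by
    show Matrix.vecMul v (b.unop.1 * a.unop.1) = Matrix.vecMul (Matrix.vecMul v b.unop.1) a.unop.1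
    rw [Matrix.vecMul_vecMul]
  smul_zero a := Matrix.zero_vecMul a.unop.1
  smul_add a v w := Matrix.add_vecMul a.unop.1 v w
  add_smul a b v := Matrix.vecMul_add a.unop.1 b.unop.1 v
  zero_smul v := Matrix.vecMul_zero v

/-!
`P_i` is the projective left ideal `A e` for the idempotent `e = E_ii`, split off from `A` by
sending `p` to the matrix whose `i`-th column is `p`. For a right `A`-module `X` this gives
`X ⊗_A (P_i ⊗_k V) ≅ X e ⊗_k V`, naturally in `X`, where the corner `X e` is a `k`-module through
`k → e A e`. An injective map `X → X'` restricts to an injective map `X e → X' e`, which stays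
injective after `⊗_k V` because `V` is flat.
-/

open MulOpposite

noncomputable section

theorem TensorProduct.addMonoidHom_ext {R M N G : Type*} [CommSemiring R] [AddCommMonoid M]
    [AddCommMonoid N] [Module R M] [Module R N] [AddCommMonoid G] {φ ψ : M ⊗[R] N →+ G}
    (h : ∀ m n, φ (m ⊗ₜ n) = ψ (m ⊗ₜ n)) : φ = ψ := by
  ext t
  induction t using TensorProduct.induction_on with
  | zero => rw [map_zero, map_zero]
  | tmul m n => exact h m n
  | add t t' ht ht' => rw [map_add, map_add, ht, ht']

namespace NCT

variable {A : Type u} [Ring A] {X : Type v} {M : Type w} [AddCommGroup X] [Module Aᵐᵒᵖ X]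
  [AddCommGroup M] [Module A M] {G : Type*} [AddCommGroup G]

theorem mk_smul (x : X) (a : A) (m : M) : mk A (op a • x) m = mk A x (a • m) :=
  (Submodule.Quotient.eq _).2 (Submodule.subset_span ⟨x, a, m, rfl⟩)

theorem mk_add_right (x : X) (m m' : M) : mk A x (m + m') = mk A x m + mk A x m' := by
  simp only [mk, TensorProduct.tmul_add, Submodule.Quotient.mk_add]
  rfl

theorem mk_add_left (x x' : X) (m : M) : mk A (x + x') m = mk A x m + mk A x' m := by
  simp only [mk, TensorProduct.add_tmul, Submodule.Quotient.mk_add]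
  rfl

theorem addHom_ext {φ ψ : NCT A X M →+ G} (h : ∀ x m, φ (mk A x m) = ψ (mk A x m)) :
    φ = ψ := by
  ext z
  obtain ⟨t, rfl⟩ := Submodule.Quotient.mk_surjective _ z
  exact DFunLike.congr_fun (TensorProduct.addMonoidHom_ext
    (φ := φ.comp (rels A X M).mkQ.toAddMonoidHom) (ψ := ψ.comp (rels A X M).mkQ.toAddMonoidHom) h) t

def lift (φ : X →+ M →+ G) (hφ : ∀ (x : X) (a : A) (m : M), φ (op a • x) m = φ x (a • m)) :
    NCT A X M →+ G :=
  (Submodule.liftQ _ (TensorProduct.liftAddHom φ fun r x m => by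
      rw [map_zsmul, AddMonoidHom.zsmul_apply, map_zsmul]).toIntLinearMap <| by
    rw [NCT.rels, Submodule.span_le]
    rintro _ ⟨x, a, m, rfl⟩
    simp [hφ]).toAddMonoidHom

def mkAddHom : X →+ M →+ NCT A X M :=
  AddMonoidHom.mk' (fun x => AddMonoidHom.mk' (mk A x) (mk_add_right x)) fun x x' =>
    AddMonoidHom.ext fun m => mk_add_left x x' m

end NCT

/-- A splitting of the surjection `A → P`, `a ↦ a • gen`; equivalently an identification of `P`
with the projective left ideal `A e` for the idempotent `e = coord gen`. -/
structure SplitCyclic (A : Type u) [Ring A] (P : Type v) [AddCommGroup P] [Module A P] where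
  gen : P
  coord : P →ₗ[A] A
  coord_smul_gen (p : P) : coord p • gen = p

namespace SplitCyclic

variable {A : Type u} [Ring A] {P : Type v} [AddCommGroup P] [Module A P] (s : SplitCyclic A P)

def idem : A := s.coord s.gen

theorem coord_mul_idem (p : P) : s.coord p * s.idem = s.coord p := by
  rw [idem, ← smul_eq_mul, ← map_smul, s.coord_smul_gen]

variable {R : Type*} [CommRing R] [Module R P]

variable (X : Type w) [AddCommGroup X] [Module Aᵐᵒᵖ X]

def corner : AddSubgroup X where
  carrier := {x | op s.idem • x = x}
  add_mem' {x y} hx hy := show op s.idem • (x + y) = x + y by rw [smul_add, hx.out, hy.out]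
  zero_mem' := smul_zero _
  neg_mem' {x} hx := show op s.idem • -x = -x by rw [smul_neg, hx.out]

variable {X}

theorem idem_smul_corner (y : s.corner X) : op s.idem • (y : X) = y := y.2

theorem coord_smul_mem_corner (p : P) (x : X) : op (s.coord p) • x ∈ s.corner X := by
  change op s.idem • _ = _
  rw [← mul_smul, ← op_mul, s.coord_mul_idem]

instance : SMul R (s.corner X) :=
  ⟨fun c y => ⟨op (s.coord (c • s.gen)) • (y : X), s.coord_smul_mem_corner _ _⟩⟩

theorem coe_smul_corner (c : R) (y : s.corner X) :
    ((c • y : s.corner X) : X) = op (s.coord (c • s.gen)) • (y : X) :=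
  rfl

variable [SMulCommClass R A P]

theorem coord_smul (c : R) (p : P) : s.coord (c • p) = s.coord p * s.coord (c • s.gen) := by
  conv_lhs => rw [← s.coord_smul_gen p, smul_comm, map_smul, smul_eq_mul]

instance : Module R (s.corner X) where
  one_smul y := Subtype.ext <| by rw [coe_smul_corner, one_smul, ← idem, idem_smul_corner]
  mul_smul c d y := Subtype.ext <| by
    simp only [coe_smul_corner, mul_smul, s.coord_smul c (d • s.gen), op_mul]
  smul_zero c := Subtype.ext (smul_zero _)
  smul_add c y z := Subtype.ext (smul_add _ _ _)
  add_smul c d y := Subtype.ext <| by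
    simp only [AddSubgroup.coe_add, coe_smul_corner, add_smul, map_add, op_add]
  zero_smul y := Subtype.ext <| by
    simp only [AddSubgroup.coe_zero, coe_smul_corner, zero_smul, map_zero, op_zero]

variable (R) in
def toCorner : X →+ P →ₗ[R] s.corner X where
  toFun x :=
    { toFun p := ⟨op (s.coord p) • x, s.coord_smul_mem_corner p x⟩
      map_add' p q := Subtype.ext <| by simp only [map_add, op_add, add_smul, AddSubgroup.coe_add]
      map_smul' c p := Subtype.ext <| by
        simp only [coe_smul_corner, s.coord_smul c p, op_mul, mul_smul, RingHom.id_apply] }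
  map_zero' := LinearMap.ext fun _ => Subtype.ext (smul_zero _)
  map_add' _ _ := LinearMap.ext fun _ => Subtype.ext (smul_add _ _ _)

theorem coe_toCorner_apply (x : X) (p : P) :
    (s.toCorner R x p : X) = op (s.coord p) • x :=
  rfl

theorem toCorner_gen (y : s.corner X) : s.toCorner R (y : X) s.gen = y :=
  Subtype.ext (s.idem_smul_corner y)

variable {X' : Type w} [AddCommGroup X'] [Module Aᵐᵒᵖ X']

variable (R) in
def cornerMap (f : X →ₗ[Aᵐᵒᵖ] X') : s.corner X →ₗ[R] s.corner X' where
  toFun y := ⟨f y, show op s.idem • f y = f y by rw [← map_smul, s.idem_smul_corner]⟩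
  map_add' _ _ := Subtype.ext (map_add f _ _)
  map_smul' _ _ := Subtype.ext (map_smul f _ _)

theorem toCorner_map (f : X →ₗ[Aᵐᵒᵖ] X') (x : X) :
    s.toCorner R (f x) = (s.cornerMap R f).comp (s.toCorner R x) :=
  LinearMap.ext fun _ => Subtype.ext (map_smul f _ _).symm

variable (R) (V : Type*) [AddCommGroup V] [Module R V]

variable (X) in
/-- `x ⊗ p ⊗ v ↦ x · coord p ⊗ v` -/
def nctToCorner : NCT A X (P ⊗[R] V) →+ s.corner X ⊗[R] V :=
  NCT.lift (LinearMap.toAddMonoidHom'.comp ((LinearMap.rTensorHom V).toAddMonoidHom.comp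
      (s.toCorner R))) fun x a m => by
    induction m using TensorProduct.induction_on with
    | zero => simp
    | tmul p v =>
      change LinearMap.rTensor V (s.toCorner R (op a • x)) (p ⊗ₜ v) =
        LinearMap.rTensor V (s.toCorner R x) (a • p ⊗ₜ v)
      rw [TensorProduct.smul_tmul', LinearMap.rTensor_tmul, LinearMap.rTensor_tmul]
      congr 1
      exact Subtype.ext <| by simp only [coe_toCorner_apply, ← mul_smul, ← op_mul, map_smul,
        smul_eq_mul]
    | add m m' hm hm' => simp_all [smul_add]

variable (X) in
/-- `y ⊗ v ↦ y ⊗ gen ⊗ v` -/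
def cornerToNCT : s.corner X ⊗[R] V →+ NCT A X (P ⊗[R] V) :=
  TensorProduct.liftAddHom
    ((NCT.mkAddHom.comp (s.corner X).subtype).compl₂ (TensorProduct.mk R P V s.gen).toAddMonoidHom)
    fun c y v => by
      change NCT.mk A (op (s.coord (c • s.gen)) • (y : X)) _ = NCT.mk A (y : X) _
      rw [NCT.mk_smul]
      change NCT.mk A _ (_ • s.gen ⊗ₜ v) = NCT.mk A _ (s.gen ⊗ₜ (c • v))
      rw [TensorProduct.smul_tmul', s.coord_smul_gen, TensorProduct.smul_tmul]

theorem nctToCorner_mk_tmul (x : X) (p : P) (v : V) :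
    s.nctToCorner R X V (NCT.mk A x (p ⊗ₜ v)) = s.toCorner R x p ⊗ₜ v :=
  rfl

theorem cornerToNCT_tmul (y : s.corner X) (v : V) :
    s.cornerToNCT R X V (y ⊗ₜ v) = NCT.mk A (y : X) (s.gen ⊗ₜ v) :=
  rfl

theorem cornerToNCT_comp_nctToCorner :
    (s.cornerToNCT R X V).comp (s.nctToCorner R X V) = .id _ :=
  NCT.addHom_ext fun x m => DFunLike.congr_fun (TensorProduct.addMonoidHom_ext
    (φ := ((s.cornerToNCT R X V).comp (s.nctToCorner R X V)).comp (NCT.mkAddHom x))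
    (ψ := NCT.mkAddHom x) fun p v => by
      change s.cornerToNCT R X V (s.nctToCorner R X V (NCT.mk A x (p ⊗ₜ v))) = NCT.mk A x (p ⊗ₜ v)
      rw [nctToCorner_mk_tmul, cornerToNCT_tmul, coe_toCorner_apply, NCT.mk_smul,
        TensorProduct.smul_tmul', s.coord_smul_gen]) m

theorem nctToCorner_comp_cornerToNCT :
    (s.nctToCorner R X V).comp (s.cornerToNCT R X V) = .id _ :=
  TensorProduct.addMonoidHom_ext fun y v => by
    change s.nctToCorner R X V (s.cornerToNCT R X V (y ⊗ₜ v)) = y ⊗ₜ v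
    rw [cornerToNCT_tmul, nctToCorner_mk_tmul, toCorner_gen]

variable (X) in
def nctEquivCorner : NCT A X (P ⊗[R] V) ≃+ s.corner X ⊗[R] V :=
  AddMonoidHom.toAddEquiv _ _ (s.cornerToNCT_comp_nctToCorner R V)
    (s.nctToCorner_comp_cornerToNCT R V)

theorem nctEquivCorner_rmap (f : X →ₗ[Aᵐᵒᵖ] X') (z : NCT A X (P ⊗[R] V)) :
    s.nctEquivCorner R X' V (NCT.rmap A f z) =
      LinearMap.rTensor V (s.cornerMap R f) (s.nctEquivCorner R X V z) := by
  refine DFunLike.congr_fun (NCT.addHom_ext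
    (φ := (s.nctToCorner R X' V).comp (NCT.rmap A f).toAddMonoidHom)
    (ψ := (LinearMap.rTensor V (s.cornerMap R f)).toAddMonoidHom.comp (s.nctToCorner R X V))
    fun x m => ?_) z
  change LinearMap.rTensor V (s.toCorner R (f x)) m =
    LinearMap.rTensor V (s.cornerMap R f) (LinearMap.rTensor V (s.toCorner R x) m)
  rw [toCorner_map, LinearMap.rTensor_comp, LinearMap.comp_apply]

theorem ncFlat_tensor (s : SplitCyclic A P) [Module.Flat R V] : NCFlat A (P ⊗[R] V) := by
  intro X X' _ _ _ _ f hf z z' hzz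
  have hcorner : Injective (s.cornerMap R f) := fun y y' h =>
    Subtype.ext (hf (congrArg Subtype.val h))
  apply (s.nctEquivCorner R X V).injective
  apply Module.Flat.rTensor_preserves_injective_linearMap _ hcorner
  rw [← nctEquivCorner_rmap, ← nctEquivCorner_rmap, hzz]

end SplitCyclic

section LowTri

variable {i : ℕ}

theorem single_one_mem_Pcol (hi : i < n) : Pi.single (⟨i, hi⟩ : Fin n) (1 : S) ∈ Pcol k S n i :=
  ⟨fun _ hj => Pi.single_eq_of_ne (Fin.ne_of_val_ne (Nat.ne_of_lt hj)) _,
    fun j hj => by obtain rfl : j = ⟨i, hi⟩ := Fin.ext hj; rw [Pi.single_eq_same]; exact one_mem _⟩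

theorem vecMulVec_mem_lowTri (hi : i < n) {p : Fin n → S} (hp : p ∈ Pcol k S n i) :
    Matrix.vecMulVec p (Pi.single ⟨i, hi⟩ 1) ∈ lowTri k S n := by
  refine ⟨fun r q hrq => ?_, fun r => ?_⟩ <;> rw [Matrix.vecMulVec_apply]
  · by_cases hq : q = ⟨i, hi⟩
    · subst hq; rw [hp.1 r hrq, zero_mul]
    · rw [Pi.single_eq_of_ne hq, mul_zero]
  · by_cases hr : r = ⟨i, hi⟩
    · rw [hr, Pi.single_eq_same, mul_one]; exact hp.2 _ rfl
    · rw [Pi.single_eq_of_ne hr, mul_zero]; exact zero_mem _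

def Pcol.splitCyclic (hi : i < n) : SplitCyclic (lowTri k S n) (Pcol k S n i) where
  gen := ⟨_, single_one_mem_Pcol k S n hi⟩
  coord :=
    { toFun p := ⟨Matrix.vecMulVec p (Pi.single ⟨i, hi⟩ 1), vecMulVec_mem_lowTri k S n hi p.2⟩
      map_add' p q := Subtype.ext (Matrix.add_vecMulVec _ _ _)
      map_smul' a p := Subtype.ext (Matrix.mul_vecMulVec a.1 p.1 _).symm }
  coord_smul_gen p := Subtype.ext <| by
    change Matrix.mulVec (Matrix.vecMulVec (p : Fin n → S) (Pi.single (⟨i, hi⟩ : Fin n) 1)) _ =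
      (p : Fin n → S)
    rw [Matrix.vecMulVec_mulVec, dotProduct_single, Pi.single_eq_same, one_mul, op_one, one_smul]

end LowTri

end

theorem statement5_general (k S : Type u) [CommRing k] [Ring S] [Algebra k S]
    (n : ℕ) (i : ℕ) (hi : i < n)
    (V : Type u) [AddCommGroup V] [Module k V] [Module.Flat k V] :
    NCFlat (lowTri k S n) ((Pcol k S n i) ⊗[k] V) :=
  (Pcol.splitCyclic k S n hi).ncFlat_tensor k V

/-- Let `k` be a commutative ring and `S` a `k`-algebra flat over `k`.
Let `n ≥ 1`, let `A ⊆ Mₙ(S)` be the subring of lower triangular matrices with diagonal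
entries in the image of `k → S`, and for `i < n` let `P_i` be the left `A`-module of
column vectors `v ∈ Sⁿ` with `v_j = 0` for `j < i` and `v_i` in the image of `k → S`.
If `V` is a flat `k`-module, then `P_i ⊗_k V` is a flat left `A`-module. -/
theorem statement5 (k S : Type u) [CommRing k] [Ring S] [Algebra k S] [Module.Flat k S]
    (n : ℕ) (hn : 1 ≤ n) (i : ℕ) (hi : i < n)
    (V : Type u) [AddCommGroup V] [Module k V] [Module.Flat k V] :
    NCFlat (lowTri k S n) ((Pcol k S n i) ⊗[k] V) :=
  statement5_general k S n i hi V
end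

section
/- Let n ≥ 1, let A ⊆ M_n(S) be the subring of lower triangular matrices with diagonal entries in the image of k → S, let P_i (1 ≤ i ≤ n) be the column modules as below, and let M = S^n be the right A-module of row vectors. Then for each 1 ≤ i ≤ n the map β_i : M ⊗_A P_i → S determined by (s_1, …, s_n) ⊗ (x_1, …, x_n) ↦ Σ_{j=1}^n s_j x_j is an isomorphism of left S-modules, where M ⊗_A P_i is a left S-module via entrywise left multiplication of S on the row vector factor. -/
open scoped TensorProduct
open Function

universe u v w

variable (k : Type u) (S : Type u) [CommRing k] [Ring S] [Algebra k S] (n : ℕ)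

section Statement7

/-- Relations defining the tensor product `M ⊗_A P_i`, where `M = Sⁿ` is the
`(S, A)`-bimodule of row vectors and `P_i` the column module:  generated by the
elements `(x·a) ⊗ p - x ⊗ (a·p)`. -/
noncomputable def rowTensRels (i : ℕ) :
    Submodule S (TensorProduct ℤ (Fin n → S) (Pcol k S n i)) :=
  Submodule.span S {z | ∃ (x : Fin n → S) (a : lowTri k S n) (p : Pcol k S n i),
    z = (Matrix.vecMul x a.1) ⊗ₜ[ℤ] p - x ⊗ₜ[ℤ] (a • p)}

/-- The tensor product `M ⊗_A P_i`, a left `S`-module via the row vectors. -/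
noncomputable def rowTens (i : ℕ) : Type u :=
  TensorProduct ℤ (Fin n → S) (Pcol k S n i) ⧸ rowTensRels k S n i

noncomputable instance (i : ℕ) : AddCommGroup (rowTens k S n i) :=
  inferInstanceAs (AddCommGroup (TensorProduct ℤ (Fin n → S) (Pcol k S n i) ⧸ rowTensRels k S n i))

noncomputable instance (i : ℕ) : Module S (rowTens k S n i) :=
  inferInstanceAs (Module S (TensorProduct ℤ (Fin n → S) (Pcol k S n i) ⧸ rowTensRels k S n i))

/-- The class of `x ⊗ p` in `M ⊗_A P_i`. -/
noncomputable def rowTens.mk (i : ℕ) (x : Fin n → S) (p : Pcol k S n i) :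
    rowTens k S n i := Submodule.Quotient.mk (x ⊗ₜ[ℤ] p)

namespace Pcol

open Matrix

variable {k S n}

/-- The generator `e_i` of `P_i`. -/
def basisVec {i : ℕ} (hi : i < n) : Pcol k S n i :=
  ⟨Pi.single ⟨i, hi⟩ 1, fun j hj => Pi.single_eq_of_ne (Fin.ne_of_lt hj) _,
    fun j hj => by rw [show j = ⟨i, hi⟩ from Fin.ext hj, Pi.single_eq_same]; exact one_mem _⟩

/-- `vecMulVec p e_i` is the matrix whose `i`-th column is `p` and whose other columns vanish. -/
theorem vecMulVec_single_mem_lowTri {i : ℕ} (hi : i < n) (p : Pcol k S n i) :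
    vecMulVec p.1 (Pi.single ⟨i, hi⟩ 1) ∈ lowTri k S n := by
  refine ⟨fun q r hqr => ?_, fun q => ?_⟩
  · by_cases hr : r = ⟨i, hi⟩
    · subst hr
      simp [vecMulVec_apply, p.2.1 q (Fin.lt_def.mp hqr)]
    · simp [vecMulVec_apply, Pi.single_eq_of_ne hr]
  · by_cases hq : q = ⟨i, hi⟩
    · subst hq
      simpa [vecMulVec_apply] using p.2.2 _ rfl
    · simp [vecMulVec_apply, Pi.single_eq_of_ne hq]

end Pcol

namespace rowTens

open Matrix

variable {k S n}

theorem smul_mk {i : ℕ} (s : S) (x : Fin n → S) (p : Pcol k S n i) :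
    s • mk k S n i x p = mk k S n i (s • x) p := by
  change Submodule.Quotient.mk (s • x ⊗ₜ[ℤ] p) = _
  rw [TensorProduct.smul_tmul']
  rfl

theorem mk_vecMul {i : ℕ} (x : Fin n → S) (a : lowTri k S n) (p : Pcol k S n i) :
    mk k S n i (x ᵥ* a.1) p = mk k S n i x (a • p) :=
  (Submodule.Quotient.eq _).mpr (Submodule.subset_span ⟨x, a, p, rfl⟩)

/-- Move the matrix with `i`-th column `p`, which sends `e_i` to `p`, across the tensor sign. -/
theorem mk_eq_mk_basisVec {i : ℕ} (hi : i < n) (x : Fin n → S) (p : Pcol k S n i) :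
    mk k S n i x p = mk k S n i (Pi.single ⟨i, hi⟩ (x ⬝ᵥ p.1)) (Pcol.basisVec hi) := by
  set a : lowTri k S n := ⟨_, Pcol.vecMulVec_single_mem_lowTri hi p⟩
  have hp : a • Pcol.basisVec hi = p := by
    ext1
    simp only [Pcol.smul_def, a, Pcol.basisVec, vecMulVec_mulVec, dotProduct_single_one,
      Pi.single_eq_same, MulOpposite.op_one, one_smul]
  have hx : x ᵥ* a.1 = Pi.single ⟨i, hi⟩ (x ⬝ᵥ p.1) := by
    rw [vecMul_vecMulVec, ← Pi.single_smul', smul_eq_mul, mul_one]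
  rw [← hx, mk_vecMul, hp]

/-- The map `β_i`. -/
noncomputable def pairing (i : ℕ) : rowTens k S n i →ₗ[S] S :=
  (rowTensRels k S n i).liftQ
    (TensorProduct.AlgebraTensorModule.lift <|
      LinearMap.mk₂' S ℤ (fun x (p : Pcol k S n i) => x ⬝ᵥ p.1)
        (fun _ _ _ => add_dotProduct _ _ _) (fun _ _ _ => smul_dotProduct _ _ _)
        (fun _ _ _ => dotProduct_add _ _ _) (fun c x p => dotProduct_smul c x p.1))
    (Submodule.span_le.mpr <| by
      rintro _ ⟨x, a, p, rfl⟩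
      simp [dotProduct_mulVec])

@[simp] theorem pairing_mk {i : ℕ} (x : Fin n → S) (p : Pcol k S n i) :
    pairing i (mk k S n i x p) = x ⬝ᵥ p.1 := rfl

@[ext] theorem linearMap_ext {N : Type*} [AddCommGroup N] [Module S N] {i : ℕ}
    {f g : rowTens k S n i →ₗ[S] N} (h : ∀ x p, f (mk k S n i x p) = g (mk k S n i x p)) :
    f = g :=
  Submodule.linearMap_qext (rowTensRels k S n i) (f := f) (g := g)
    (TensorProduct.AlgebraTensorModule.ext h)

/-- `β_i` is inverted by `s ↦ s e_i ⊗ e_i`. -/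
noncomputable def pairingEquiv {i : ℕ} (hi : i < n) : rowTens k S n i ≃ₗ[S] S :=
  LinearEquiv.ofLinearMap (pairing i)
    (LinearMap.toSpanSingleton S _ (mk k S n i (Pi.single ⟨i, hi⟩ 1) (Pcol.basisVec hi)))
    (LinearMap.ext_ring <| by simp [Pcol.basisVec])
    (linearMap_ext fun x p => by
      simp [smul_mk, ← Pi.single_smul', ← mk_eq_mk_basisVec hi])

end rowTens

theorem statement7_general (k S : Type u) [CommRing k] [Ring S] [Algebra k S]
    (n : ℕ) (i : ℕ) (hi : i < n) :
    ∃ e : rowTens k S n i ≃ₗ[S] S,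
      ∀ (x : Fin n → S) (p : Pcol k S n i),
        e (rowTens.mk k S n i x p) = ∑ j : Fin n, x j * p.1 j :=
  ⟨rowTens.pairingEquiv hi, fun _ _ => rfl⟩

/-- Let `k` be a commutative ring and `S` a `k`-algebra flat over `k`.
Let `n ≥ 1`, `A ⊆ Mₙ(S)` the subring of lower triangular matrices with diagonal entries
in the image of `k → S`, `P_i` (for `i < n`) the column modules, and `M = Sⁿ` the right
`A`-module of row vectors.  Then for each `i < n` the map `β_i : M ⊗_A P_i → S`
determined by `(s_1, …, s_n) ⊗ (x_1, …, x_n) ↦ ∑ⱼ sⱼ xⱼ` is an isomorphism of left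
`S`-modules. -/
theorem statement7 (k S : Type u) [CommRing k] [Ring S] [Algebra k S] [Module.Flat k S]
    (n : ℕ) (hn : 1 ≤ n) (i : ℕ) (hi : i < n) :
    ∃ e : rowTens k S n i ≃ₗ[S] S,
      ∀ (x : Fin n → S) (p : Pcol k S n i),
        e (rowTens.mk k S n i x p) = ∑ j : Fin n, x j * p.1 j :=
  statement7_general k S n i hi

end Statement7
end

section
/- Let n ≥ 1, let A ⊆ M_n(S) be the subring of lower triangular matrices with diagonal entries in the image of k → S, let P_i (1 ≤ i ≤ n) be the column modules as below, and let N = S^n be the left M_n(S)-module of column vectors. Regard M_n(S) as a right A-module via the inclusion A ⊆ M_n(S). Then for each 1 ≤ i ≤ n the map M_n(S) ⊗_A P_i → N given by matrix–column multiplication, X ⊗ v ↦ Xv, is an isomorphism of left M_n(S)-modules. -/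
open scoped TensorProduct
open Function

universe u v w

variable (k : Type u) (S : Type u) [CommRing k] [Ring S] [Algebra k S] (n : ℕ)

section Statement8

/-- Left action of the full matrix ring `Mₙ(S)` on the column vectors `Sⁿ`. -/
noncomputable instance matColSMul : SMul (Matrix (Fin n) (Fin n) S) (Fin n → S) :=
  ⟨fun X v => X.mulVec v⟩

noncomputable instance matColModule : Module (Matrix (Fin n) (Fin n) S) (Fin n → S) where
  smul := (· • ·)
  one_smul v := Matrix.one_mulVec v
  mul_smul X Y v := (Matrix.mulVec_mulVec v X Y).symm
  smul_zero X := Matrix.mulVec_zero X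
  smul_add X v w := Matrix.mulVec_add X v w
  add_smul X Y v := Matrix.add_mulVec X Y v
  zero_smul v := Matrix.zero_mulVec v

/-- Relations defining `Mₙ(S) ⊗_A P_i`, where `Mₙ(S)` is a right `A`-module via the
inclusion `A ⊆ Mₙ(S)`:  generated by the elements `(X·a) ⊗ p - X ⊗ (a·p)`. -/
noncomputable def matTensRels (i : ℕ) :
    Submodule (Matrix (Fin n) (Fin n) S)
      (TensorProduct ℤ (Matrix (Fin n) (Fin n) S) (Pcol k S n i)) :=
  Submodule.span (Matrix (Fin n) (Fin n) S)
    {z | ∃ (X : Matrix (Fin n) (Fin n) S) (a : lowTri k S n) (p : Pcol k S n i),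
      z = (X * a.1) ⊗ₜ[ℤ] p - X ⊗ₜ[ℤ] (a • p)}

/-- The tensor product `Mₙ(S) ⊗_A P_i`, a left `Mₙ(S)`-module. -/
noncomputable def matTens (i : ℕ) : Type u :=
  TensorProduct ℤ (Matrix (Fin n) (Fin n) S) (Pcol k S n i) ⧸ matTensRels k S n i

noncomputable instance (i : ℕ) : AddCommGroup (matTens k S n i) :=
  inferInstanceAs (AddCommGroup
    (TensorProduct ℤ (Matrix (Fin n) (Fin n) S) (Pcol k S n i) ⧸ matTensRels k S n i))

noncomputable instance (i : ℕ) : Module (Matrix (Fin n) (Fin n) S) (matTens k S n i) :=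
  inferInstanceAs (Module (Matrix (Fin n) (Fin n) S)
    (TensorProduct ℤ (Matrix (Fin n) (Fin n) S) (Pcol k S n i) ⧸ matTensRels k S n i))

/-- The class of `X ⊗ p` in `Mₙ(S) ⊗_A P_i`. -/
noncomputable def matTens.mk (i : ℕ) (X : Matrix (Fin n) (Fin n) S) (p : Pcol k S n i) :
    matTens k S n i := Submodule.Quotient.mk (X ⊗ₜ[ℤ] p)

/-!
The inverse of `X ⊗ p ↦ X p` is `v ↦ C(v) ⊗ eᵢ`, where `C(v) = vecMulVec v eᵢ` is the matrix
whose `i`-th column is `v` and whose other columns vanish. For `p ∈ P_i` the matrix `C(p)` is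
lower triangular with diagonal in the image of `k`, i.e. lies in `A`, and `C(p) eᵢ = p`; hence
`X ⊗ p = X ⊗ C(p) eᵢ = X C(p) ⊗ eᵢ = C(X p) ⊗ eᵢ`, which is the value of the inverse at `X p`.
-/

open Matrix

lemma Matrix.vecMulVec_single_one_mulVec {m R : Type*} [Fintype m] [DecidableEq m] [Semiring R]
    (v : m → R) (j : m) : vecMulVec v (Pi.single j 1) *ᵥ Pi.single j 1 = v := by
  ext l
  simp [vecMulVec_apply]

variable {k S n}

noncomputable def Pcol.generator {i : ℕ} (hi : i < n) : Pcol k S n i :=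
  ⟨Pi.single ⟨i, hi⟩ 1,
    fun j hj => Pi.single_eq_of_ne (Fin.ne_of_lt hj) 1,
    fun j hj => by rw [show j = ⟨i, hi⟩ from Fin.ext hj, Pi.single_eq_same]; exact one_mem _⟩

lemma vecMulVec_single_one_mem_lowTri {i : ℕ} (hi : i < n) {p : Fin n → S}
    (hp : p ∈ Pcol k S n i) : vecMulVec p (Pi.single ⟨i, hi⟩ 1) ∈ lowTri k S n := by
  refine ⟨fun a b hab => ?_, fun a => ?_⟩
  · rcases eq_or_ne b ⟨i, hi⟩ with rfl | hb
    · simp [vecMulVec_apply, hp.1 a hab]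
    · simp [vecMulVec_apply, hb]
  · rcases eq_or_ne a ⟨i, hi⟩ with rfl | ha
    · simpa [vecMulVec_apply] using hp.2 _ rfl
    · simp [vecMulVec_apply, ha]

namespace matTens

lemma mk_mul (i : ℕ) (X : Matrix (Fin n) (Fin n) S) (a : lowTri k S n) (p : Pcol k S n i) :
    mk k S n i (X * a.1) p = mk k S n i X (a • p) :=
  (Submodule.Quotient.eq _).2 <| Submodule.subset_span ⟨X, a, p, rfl⟩

lemma mk_add (i : ℕ) (X Y : Matrix (Fin n) (Fin n) S) (p : Pcol k S n i) :
    mk k S n i (X + Y) p = mk k S n i X p + mk k S n i Y p := by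
  rw [mk, TensorProduct.add_tmul]
  rfl

lemma smul_mk (i : ℕ) (X Y : Matrix (Fin n) (Fin n) S) (p : Pcol k S n i) :
    X • mk k S n i Y p = mk k S n i (X * Y) p := by
  rw [mk, mk, ← smul_eq_mul, ← TensorProduct.smul_tmul']
  rfl

variable (k S n) in
noncomputable def toCol (i : ℕ) :
    matTens k S n i →ₗ[Matrix (Fin n) (Fin n) S] (Fin n → S) :=
  (matTensRels k S n i).liftQ
    (TensorProduct.AlgebraTensorModule.lift <|
      LinearMap.mk₂' (Matrix (Fin n) (Fin n) S) ℤ (fun X (p : Pcol k S n i) => X *ᵥ p.1)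
        (fun X Y p => add_mulVec X Y p.1) (fun X Y p => (mulVec_mulVec p.1 X Y).symm)
        (fun X p q => mulVec_add X p.1 q.1) (fun c X p => mulVec_smul X c p.1))
    (by
      rw [matTensRels, Submodule.span_le]
      rintro _ ⟨X, a, p, rfl⟩
      simp)

variable (k S n) in
noncomputable def ofCol {i : ℕ} (hi : i < n) :
    (Fin n → S) →ₗ[Matrix (Fin n) (Fin n) S] matTens k S n i where
  toFun v := mk k S n i (vecMulVec v (Pi.single ⟨i, hi⟩ 1)) (Pcol.generator hi)
  map_add' v w := by rw [add_vecMulVec, mk_add]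
  map_smul' X v := by rw [RingHom.id_apply, smul_mk, mul_vecMulVec]; rfl

variable (k) in
lemma toCol_ofCol {i : ℕ} (hi : i < n) (v : Fin n → S) : toCol k S n i (ofCol k S n hi v) = v :=
  vecMulVec_single_one_mulVec v _

lemma mk_eq_ofCol {i : ℕ} (hi : i < n) (X : Matrix (Fin n) (Fin n) S) (p : Pcol k S n i) :
    mk k S n i X p = ofCol k S n hi (X *ᵥ p.1) := by
  let a : lowTri k S n := ⟨_, vecMulVec_single_one_mem_lowTri hi p.2⟩
  have ha : a • Pcol.generator hi = p := Subtype.ext (vecMulVec_single_one_mulVec p.1 _)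
  calc mk k S n i X p = mk k S n i (X * a.1) (Pcol.generator hi) := by rw [mk_mul, ha]
    _ = ofCol k S n hi (X *ᵥ p.1) := congrArg (mk k S n i · _) (mul_vecMulVec X p.1 _)

variable (k) in
lemma ofCol_comp_toCol {i : ℕ} (hi : i < n) :
    (ofCol k S n hi).comp (toCol k S n i) = LinearMap.id :=
  Submodule.linearMap_qext _ <| TensorProduct.AlgebraTensorModule.ext fun X p =>
    (mk_eq_ofCol hi X p).symm

end matTens

theorem statement8_general (k S : Type u) [CommRing k] [Ring S] [Algebra k S]
    (n : ℕ) (i : ℕ) (hi : i < n) :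
    ∃ e : matTens k S n i ≃ₗ[Matrix (Fin n) (Fin n) S] (Fin n → S),
      ∀ (X : Matrix (Fin n) (Fin n) S) (p : Pcol k S n i),
        e (matTens.mk k S n i X p) = X.mulVec p.1 :=
  ⟨.ofLinearMap (matTens.toCol k S n i) (matTens.ofCol k S n hi)
    (LinearMap.ext (matTens.toCol_ofCol k hi)) (matTens.ofCol_comp_toCol k hi), fun _ _ => rfl⟩

/-- Let `k` be a commutative ring and `S` a `k`-algebra flat over `k`.
Let `n ≥ 1`, `A ⊆ Mₙ(S)` the subring of lower triangular matrices with diagonal entries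
in the image of `k → S`, `P_i` (for `i < n`) the column modules, and `N = Sⁿ` the left
`Mₙ(S)`-module of column vectors.  Regarding `Mₙ(S)` as a right `A`-module via the
inclusion, for each `i < n` the map `Mₙ(S) ⊗_A P_i → N`, `X ⊗ v ↦ X v`, is an
isomorphism of left `Mₙ(S)`-modules. -/
theorem statement8 (k S : Type u) [CommRing k] [Ring S] [Algebra k S] [Module.Flat k S]
    (n : ℕ) (hn : 1 ≤ n) (i : ℕ) (hi : i < n) :
    ∃ e : matTens k S n i ≃ₗ[Matrix (Fin n) (Fin n) S] (Fin n → S),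
      ∀ (X : Matrix (Fin n) (Fin n) S) (p : Pcol k S n i),
        e (matTens.mk k S n i X p) = X.mulVec p.1 :=
  statement8_general k S n i hi

end Statement8
end
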